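/- Let a 3SAT instance with n variables and m clauses be given, and let G be the graph constructed from it as described, with source s = u_0 and sink t = v_m. Let U be a directed path from s to t with reuse-length exactly n, and define a truth assignment by setting x_i to true if U passes through u'_i and to false if U passes through ū'_i. Then this assignment makes every clause C_j true. -/

import Mathlib

/-! ## Generic definitions: reuse-length, paths -/

/-- Auxiliary for the reuse-length: `seen` is the list of information values of
earlier edges; an edge contributes its weight only if its information value is new. -/
def reuseLenAux {E I : Type} [DecidableEq I] (w : E → ℕ) (f : E → I) :
    List I → List E → ℕ
  | _, [] => 0
  | seen, e :: rest =>
      (if f e ∈ seen then 0 else w e) + reuseLenAux w f (f e :: seen) rest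

/-- The reuse-length `r(U)` of a list of edges `U`: the sum of `w e` over those
edges `e` of `U` such that no earlier edge `e'` on `U` has `f e' = f e`. -/
def reuseLen {E I : Type} [DecidableEq I] (w : E → ℕ) (f : E → I) (U : List E) : ℕ :=
  reuseLenAux w f [] U

/-- The list of (directed) edges of a path given by its list of vertices. -/
def edgesOf {V : Type} (p : List V) : List (V × V) := p.zip p.tail

/-- `p` is a (simple) directed path from `s` to `t` with respect to adjacency `adj`:
its consecutive vertices are adjacent, its vertices are pairwise distinct,
it starts at `s` and ends at `t`. -/
def IsPath {V : Type} (adj : V → V → Prop) (s t : V) (p : List V) : Prop :=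
  p.Chain' adj ∧ p.Nodup ∧ p.head? = some s ∧ p.getLast? = some t

/-! ## The 3SAT reduction graph
A 3SAT instance with `n` variables `x_0, …, x_{n-1}` and `m` clauses is given by
`C : ℕ → Fin 3 → ℕ × Bool`, where `C j k = (i, b)` means that literal `k` of clause
`C_j` is `x_i` (if `b = true`) resp. `¬ x_i` (if `b = false`); only the values for
`j < m` are relevant, and well-formedness (`i < n`) is a hypothesis of the theorems. -/

/-- The 3SAT instance (first `m` clauses of `C`) is satisfiable. -/
def Satisfiable (m : ℕ) (C : ℕ → Fin 3 → ℕ × Bool) : Prop :=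
  ∃ σ : ℕ → Bool, ∀ j < m, ∃ k : Fin 3, σ (C j k).1 = (C j k).2

/-- Vertices of the 3SAT reduction graph: `u i` is `u_i`, `up i` is `u'_i`,
`un i` is `ū'_i`, `v j` is `v_j` and `vk j k` is `v^k_j`. -/
inductive Vert : Type
  | u : ℕ → Vert
  | up : ℕ → Vert
  | un : ℕ → Vert
  | v : ℕ → Vert
  | vk : ℕ → Fin 3 → Vert
  deriving DecidableEq

/-- The edges of the 3SAT reduction graph for `n` variables and `m` clauses. -/
def satAdj (n m : ℕ) : Vert → Vert → Prop
  | .u i, .up i' => i' = i ∧ i < n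
  | .u i, .un i' => i' = i ∧ i < n
  | .up i, .u i' => i' = i + 1 ∧ i < n
  | .un i, .u i' => i' = i + 1 ∧ i < n
  | .u i, .v j => i = n ∧ j = 0
  | .v j, .vk j' _ => j' = j ∧ j < m
  | .vk j _, .v j' => j' = j + 1 ∧ j < m
  | _, _ => False

/-- Edge weights: the edges `(u_i, u'_i)`, `(u_i, ū'_i)` and `(v_j, v^k_j)`
have weight 1, all other edges have weight 0. -/
def satW : Vert × Vert → ℕ
  | (.u _, .up _) => 1
  | (.u _, .un _) => 1
  | (.v _, .vk _ _) => 1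
  | _ => 0

/-- Edge information values: `pos i` is shared by `(u_i, u'_i)` and all clause edges
whose literal is `x_i`; `neg i` is shared by `(u_i, ū'_i)` and all clause edges whose
literal is `¬ x_i`; all remaining edges get the pairwise distinct fresh value `other e`. -/
inductive Info : Type
  | pos : ℕ → Info
  | neg : ℕ → Info
  | other : Vert × Vert → Info
  deriving DecidableEq

/-- The edge information function of the 3SAT reduction graph. -/
def satF (C : ℕ → Fin 3 → ℕ × Bool) : Vert × Vert → Info
  | (.u i, .up _) => .pos i
  | (.u i, .un _) => .neg i
  | (.v j, .vk _ k) => if (C j k).2 then .pos (C j k).1 else .neg (C j k).1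
  | e => .other e

/-! ## Auxiliary lemmas for the proof -/

lemma edgesOf_cons_cons {V : Type} (a b : V) (l : List V) :
    edgesOf (a :: b :: l) = (a, b) :: edgesOf (b :: l) := rfl

lemma reuseLenAux_cons {E I : Type} [DecidableEq I] (w : E → ℕ) (f : E → I)
    (seen : List I) (e : E) (rest : List E) :
    reuseLenAux w f seen (e :: rest) =
      (if f e ∈ seen then 0 else w e) + reuseLenAux w f (f e :: seen) rest := rfl

/-- The seen-list is consistent with the assignment `σ`. -/
def ConsSeen (σ : ℕ → Bool) (seen : List Info) : Prop :=
  ∀ x : ℕ, (Info.pos x ∈ seen → σ x = true) ∧ (Info.neg x ∈ seen → σ x = false)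

lemma ConsSeen.cons_other {σ : ℕ → Bool} {seen : List Info} (h : ConsSeen σ seen)
    (e : Vert × Vert) : ConsSeen σ (Info.other e :: seen) := by
  intro y
  refine ⟨fun hy => ?_, fun hy => ?_⟩
  · rcases List.mem_cons.mp hy with h' | h'
    · simp at h'
    · exact (h y).1 h'
  · rcases List.mem_cons.mp hy with h' | h'
    · simp at h'
    · exact (h y).2 h'

lemma ConsSeen.cons_pos {σ : ℕ → Bool} {seen : List Info} (h : ConsSeen σ seen)
    {x : ℕ} (hx : σ x = true) : ConsSeen σ (Info.pos x :: seen) := by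
  intro y
  refine ⟨fun hy => ?_, fun hy => ?_⟩
  · rcases List.mem_cons.mp hy with h' | h'
    · obtain rfl : y = x := by injection h'
      exact hx
    · exact (h y).1 h'
  · rcases List.mem_cons.mp hy with h' | h'
    · simp at h'
    · exact (h y).2 h'

lemma ConsSeen.cons_neg {σ : ℕ → Bool} {seen : List Info} (h : ConsSeen σ seen)
    {x : ℕ} (hx : σ x = false) : ConsSeen σ (Info.neg x :: seen) := by
  intro y
  refine ⟨fun hy => ?_, fun hy => ?_⟩
  · rcases List.mem_cons.mp hy with h' | h'
    · simp at h'
    · exact (h y).1 h'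
  · rcases List.mem_cons.mp hy with h' | h'
    · obtain rfl : y = x := by injection h'
      exact hx
    · exact (h y).2 h'

/-- The clause segment: if a path from `v j` to `v m` contributes reuse-length `0`
over a consistent seen-list, then all clauses `j ≤ j' < m` are satisfied. -/
lemma clauseLemma (n m : ℕ) (C : ℕ → Fin 3 → ℕ × Bool) (σ : ℕ → Bool) :
    ∀ (N : ℕ) (q : List Vert) (j : ℕ) (seen : List Info), q.length ≤ N →
      List.Chain' (satAdj n m) (Vert.v j :: q) →
      (Vert.v j :: q).getLast? = some (Vert.v m) →
      ConsSeen σ seen →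
      reuseLenAux satW (satF C) seen (edgesOf (Vert.v j :: q)) = 0 →
      ∀ j', j ≤ j' → j' < m → ∃ k : Fin 3, σ (C j' k).1 = (C j' k).2 := by
  intro N
  induction N with
  | zero =>
    intro q j seen hlen hch hlast hcons hr j' hjj' hj'
    cases q with
    | nil => simp at hlast; omega
    | cons w q' => simp at hlen
  | succ N ih =>
    intro q j seen hlen hch hlast hcons hr j' hjj' hj'
    cases q with
    | nil => simp at hlast; omega
    | cons w q' =>
      simp only [List.Chain', List.isChain_cons_cons] at hch
      obtain ⟨h1, hch⟩ := hch
      cases w with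
      | u a => exact h1.elim
      | up a => exact h1.elim
      | un a => exact h1.elim
      | v a => exact h1.elim
      | vk j2 k =>
        obtain ⟨h1a, hjm⟩ := h1
        obtain rfl : j = j2 := h1a.symm
        cases q' with
        | nil => simp at hlast
        | cons w' q'' =>
          rw [List.isChain_cons_cons] at hch
          obtain ⟨h2, hch⟩ := hch
          cases w' with
          | u a => exact h2.elim
          | up a => exact h2.elim
          | un a => exact h2.elim
          | vk a b => exact h2.elim
          | v j3 =>
            obtain ⟨rfl, -⟩ : j3 = j + 1 ∧ j < m := h2
            rw [edgesOf_cons_cons, reuseLenAux_cons, edgesOf_cons_cons,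
              reuseLenAux_cons] at hr
            rw [show satW (Vert.v j, Vert.vk j k) = 1 from rfl,
              show satW (Vert.vk j k, Vert.v (j + 1)) = 0 from rfl, ite_self] at hr
            have hmem : satF C (Vert.v j, Vert.vk j k) ∈ seen := by
              by_contra hmem
              rw [if_neg hmem] at hr
              omega
            have hsat : σ (C j k).1 = (C j k).2 := by
              have hx := hcons (C j k).1
              cases hb : (C j k).2 with
              | true =>
                rw [show satF C (Vert.v j, Vert.vk j k) = Info.pos (C j k).1 by
                  simp [satF, hb]] at hmem
                exact hx.1 hmem
              | false =>
                rw [show satF C (Vert.v j, Vert.vk j k) = Info.neg (C j k).1 by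
                  simp [satF, hb]] at hmem
                exact hx.2 hmem
            rw [if_pos hmem] at hr
            have hcons1 : ConsSeen σ (satF C (Vert.v j, Vert.vk j k) :: seen) := by
              cases hb : (C j k).2 with
              | true =>
                rw [show satF C (Vert.v j, Vert.vk j k) = Info.pos (C j k).1 by
                  simp [satF, hb]]
                exact hcons.cons_pos (by rw [hsat, hb])
              | false =>
                rw [show satF C (Vert.v j, Vert.vk j k) = Info.neg (C j k).1 by
                  simp [satF, hb]]
                exact hcons.cons_neg (by rw [hsat, hb])
            have hcons2 : ConsSeen σ (satF C (Vert.vk j k, Vert.v (j + 1)) ::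
                satF C (Vert.v j, Vert.vk j k) :: seen) := by
              rw [show satF C (Vert.vk j k, Vert.v (j + 1)) =
                Info.other (Vert.vk j k, Vert.v (j + 1)) from rfl]
              exact hcons1.cons_other _
            rcases Nat.eq_or_lt_of_le hjj' with rfl | hlt
            · exact ⟨k, hsat⟩
            · rw [List.getLast?_cons_cons, List.getLast?_cons_cons] at hlast
              exact ih q'' (j + 1) _ (by simp at hlen; omega) hch hlast hcons2
                (by omega) j' hlt hj'

/-- The variable segment lemma. -/
lemma varLemma (n m : ℕ) (C : ℕ → Fin 3 → ℕ × Bool) (σ : ℕ → Bool) (p : List Vert)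
    (hσ : ∀ i < n, (σ i = true ↔ Vert.up i ∈ p) ∧ (σ i = false ↔ Vert.un i ∈ p)) :
    ∀ (N : ℕ) (q : List Vert) (i : ℕ) (seen : List Info), q.length ≤ N → i ≤ n →
      List.Chain' (satAdj n m) (Vert.u i :: q) →
      (Vert.u i :: q).getLast? = some (Vert.v m) →
      (∀ x, i ≤ x → Info.pos x ∉ seen ∧ Info.neg x ∉ seen) →
      ConsSeen σ seen →
      (∀ a ∈ q, a ∈ p) →
      n - i ≤ reuseLenAux satW (satF C) seen (edgesOf (Vert.u i :: q)) ∧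
      (reuseLenAux satW (satF C) seen (edgesOf (Vert.u i :: q)) = n - i →
        ∀ j' < m, ∃ k : Fin 3, σ (C j' k).1 = (C j' k).2) := by
  intro N
  induction N with
  | zero =>
    intro q i seen hlen hin hch hlast hfresh hcons hsub
    cases q with
    | nil => simp at hlast
    | cons w q' => simp at hlen
  | succ N ih =>
    intro q i seen hlen hin hch hlast hfresh hcons hsub
    cases q with
    | nil => simp at hlast
    | cons w q' =>
      simp only [List.Chain', List.isChain_cons_cons] at hch
      obtain ⟨h1, hch⟩ := hch
      cases w with
      | u a => exact h1.elim
      | vk a b => exact h1.elim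
      | up i2 =>
        obtain ⟨h1a, hiln⟩ := h1
        obtain rfl : i = i2 := h1a.symm
        cases q' with
        | nil => simp at hlast
        | cons w' q'' =>
          rw [List.isChain_cons_cons] at hch
          obtain ⟨h2, hch⟩ := hch
          cases w' with
          | up a => exact h2.elim
          | un a => exact h2.elim
          | v a => exact h2.elim
          | vk a b => exact h2.elim
          | u i3 =>
            obtain ⟨rfl, -⟩ : i3 = i + 1 ∧ i < n := h2
            rw [edgesOf_cons_cons, reuseLenAux_cons, edgesOf_cons_cons,
              reuseLenAux_cons]
            rw [show satW (Vert.u i, Vert.up i) = 1 from rfl,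
              show satW (Vert.up i, Vert.u (i + 1)) = 0 from rfl, ite_self]
            rw [show satF C (Vert.u i, Vert.up i) = Info.pos i from rfl]
            rw [if_neg (hfresh i le_rfl).1]
            rw [show satF C (Vert.up i, Vert.u (i + 1)) =
              Info.other (Vert.up i, Vert.u (i + 1)) from rfl]
            have hmemp : Vert.up i ∈ p := hsub _ List.mem_cons_self
            have hσi : σ i = true := ((hσ i hiln).1).mpr hmemp
            have hfresh' : ∀ x, i + 1 ≤ x →
                Info.pos x ∉ (Info.other (Vert.up i, Vert.u (i + 1)) ::
                  Info.pos i :: seen) ∧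
                Info.neg x ∉ (Info.other (Vert.up i, Vert.u (i + 1)) ::
                  Info.pos i :: seen) := by
              intro x hx
              have hx0 := hfresh x (by omega)
              constructor <;> intro hmem <;> simp only [List.mem_cons] at hmem
              · rcases hmem with h' | h' | h'
                · simp at h'
                · obtain rfl : x = i := by injection h'
                  omega
                · exact hx0.1 h'
              · rcases hmem with h' | h' | h'
                · simp at h'
                · simp at h'
                · exact hx0.2 h'
            have hcons' : ConsSeen σ (Info.other (Vert.up i, Vert.u (i + 1)) ::
                Info.pos i :: seen) := (hcons.cons_pos hσi).cons_other _
            rw [List.getLast?_cons_cons, List.getLast?_cons_cons] at hlast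
            have hmain := ih q'' (i + 1) _ (by simp at hlen; omega) (by omega)
              hch hlast hfresh' hcons'
              (fun a ha => hsub a (List.mem_cons_of_mem _ (List.mem_cons_of_mem _ ha)))
            refine ⟨by omega, fun hr => ?_⟩
            exact hmain.2 (by omega)
      | un i2 =>
        obtain ⟨h1a, hiln⟩ := h1
        obtain rfl : i = i2 := h1a.symm
        cases q' with
        | nil => simp at hlast
        | cons w' q'' =>
          rw [List.isChain_cons_cons] at hch
          obtain ⟨h2, hch⟩ := hch
          cases w' with
          | up a => exact h2.elim
          | un a => exact h2.elim
          | v a => exact h2.elim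
          | vk a b => exact h2.elim
          | u i3 =>
            obtain ⟨rfl, -⟩ : i3 = i + 1 ∧ i < n := h2
            rw [edgesOf_cons_cons, reuseLenAux_cons, edgesOf_cons_cons,
              reuseLenAux_cons]
            rw [show satW (Vert.u i, Vert.un i) = 1 from rfl,
              show satW (Vert.un i, Vert.u (i + 1)) = 0 from rfl, ite_self]
            rw [show satF C (Vert.u i, Vert.un i) = Info.neg i from rfl]
            rw [if_neg (hfresh i le_rfl).2]
            rw [show satF C (Vert.un i, Vert.u (i + 1)) =
              Info.other (Vert.un i, Vert.u (i + 1)) from rfl]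
            have hmemp : Vert.un i ∈ p := hsub _ List.mem_cons_self
            have hσi : σ i = false := ((hσ i hiln).2).mpr hmemp
            have hfresh' : ∀ x, i + 1 ≤ x →
                Info.pos x ∉ (Info.other (Vert.un i, Vert.u (i + 1)) ::
                  Info.neg i :: seen) ∧
                Info.neg x ∉ (Info.other (Vert.un i, Vert.u (i + 1)) ::
                  Info.neg i :: seen) := by
              intro x hx
              have hx0 := hfresh x (by omega)
              constructor <;> intro hmem <;> simp only [List.mem_cons] at hmem
              · rcases hmem with h' | h' | h'
                · simp at h'
                · simp at h'
                · exact hx0.1 h'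
              · rcases hmem with h' | h' | h'
                · simp at h'
                · obtain rfl : x = i := by injection h'
                  omega
                · exact hx0.2 h'
            have hcons' : ConsSeen σ (Info.other (Vert.un i, Vert.u (i + 1)) ::
                Info.neg i :: seen) := (hcons.cons_neg hσi).cons_other _
            rw [List.getLast?_cons_cons, List.getLast?_cons_cons] at hlast
            have hmain := ih q'' (i + 1) _ (by simp at hlen; omega) (by omega)
              hch hlast hfresh' hcons'
              (fun a ha => hsub a (List.mem_cons_of_mem _ (List.mem_cons_of_mem _ ha)))
            refine ⟨by omega, fun hr => ?_⟩
            exact hmain.2 (by omega)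
      | v j2 =>
        obtain ⟨h1a, rfl⟩ := h1
        obtain rfl : n = i := h1a.symm
        rw [edgesOf_cons_cons, reuseLenAux_cons]
        rw [show satW (Vert.u n, Vert.v 0) = 0 from rfl, ite_self]
        rw [show satF C (Vert.u n, Vert.v 0) =
          Info.other (Vert.u n, Vert.v 0) from rfl]
        rw [List.getLast?_cons_cons] at hlast
        refine ⟨by omega, fun hr => fun j' hj' => ?_⟩
        exact clauseLemma n m C σ q'.length q' 0
          (Info.other (Vert.u n, Vert.v 0) :: seen) le_rfl hch hlast
          (hcons.cons_other _) (by omega) j' (Nat.zero_le _) hj'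

/-- Let `U` be a directed path from `s = u_0` to `t = v_m` of
reuse-length exactly `n`, and let `σ` be the truth assignment that sets `x_i` to true
if `U` passes through `u'_i` and to false if `U` passes through `ū'_i`.  Then `σ` makes
every clause `C_j` true. -/
theorem stmt_7 (n m : ℕ) (C : ℕ → Fin 3 → ℕ × Bool)
    (hC : ∀ j < m, ∀ k : Fin 3, (C j k).1 < n)
    (p : List Vert) (hp : IsPath (satAdj n m) (.u 0) (.v m) p)
    (hr : reuseLen satW (satF C) (edgesOf p) = n)
    (σ : ℕ → Bool)
    (hσ : ∀ i < n, (σ i = true ↔ Vert.up i ∈ p) ∧ (σ i = false ↔ Vert.un i ∈ p)) :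
    ∀ j < m, ∃ k : Fin 3, σ (C j k).1 = (C j k).2 := by
  obtain ⟨hch, hnd, hhead, hlast⟩ := hp
  cases p with
  | nil => simp at hhead
  | cons a q =>
    obtain rfl : a = Vert.u 0 := by simpa using hhead
    have hmain := varLemma n m C σ (Vert.u 0 :: q) hσ q.length q 0 [] le_rfl
      (Nat.zero_le n) hch hlast
      (fun x _ => ⟨List.not_mem_nil, List.not_mem_nil⟩)
      (fun x => ⟨fun h => absurd h List.not_mem_nil,
        fun h => absurd h List.not_mem_nil⟩)
      (fun a ha => List.mem_cons_of_mem _ ha)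
    intro j hj
    have hr' : reuseLenAux satW (satF C) [] (edgesOf (Vert.u 0 :: q)) = n - 0 := by
      rw [Nat.sub_zero]; exact hr
    exact hmain.2 hr' j hj
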